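/- Let τ>0 and η∈(0,1]. Let f : [0,∞) → [0,∞) be a C² function with f(0)=0, f(1)=1, f'(0)>1, f'(1)<1, f'(u)>0 for all u∈(0,1), and f(u)>u for all u∈(0,1), let f_η be a bistable approximation of f, and let (U,c) be a nonincreasing C² travelling wave: U''(z) + c·U'(z) + f_η(U(z + cτ)) − U(z) = 0 for all z∈ℝ, U(−∞)=1, U(+∞)=−η. Then there exist constants μ>0 and M>0 such that |1 − U(z)| + |−η − U(−z)| ≤ M·e^{μz} for all z ≤ 0, and |U'(z)| + |U''(z)| ≤ M·e^{−μ|z|} for all z∈ℝ. -/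

import Mathlib

open Set Filter
open scoped Topology

/-- `f : [0,∞) → [0,∞)` is a monostable nonlinearity of class `C²`:
`f(0)=0`, `f(1)=1`, `f'(0)>1`, `f'(1)<1`, `f'>0` on `(0,1)` and `f(u)>u` on `(0,1)`. -/
structure Monostable (f : ℝ → ℝ) : Prop where
  smooth : ContDiffOn ℝ 2 f (Ici 0)
  nonneg : ∀ u, 0 ≤ u → 0 ≤ f u
  map0 : f 0 = 0
  map1 : f 1 = 1
  slope0 : 1 < derivWithin f (Ici 0) 0
  slope1 : derivWithin f (Ici 0) 1 < 1
  derivPos : ∀ u ∈ Ioo (0:ℝ) 1, 0 < derivWithin f (Ici 0) u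
  aboveId : ∀ u ∈ Ioo (0:ℝ) 1, u < f u

/-- `feta` is a bistable approximation of the monostable nonlinearity `f`:
a bounded increasing `C²` extension of `f|_{[0,1]}` with `feta(−η)=−η`, `feta'(−η)<1`,
`feta(u)<u` on `(−η,0)∪(1,∞)` and `feta(u)>u` on `(−∞,−η)∪(0,1)`. -/
structure BistableApprox (f feta : ℝ → ℝ) (η : ℝ) : Prop where
  smooth : ContDiff ℝ 2 feta
  bounded : ∃ M, ∀ u, |feta u| ≤ M
  mono : StrictMono feta
  eqOn : ∀ u ∈ Icc (0:ℝ) 1, feta u = f u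
  fixed : feta (-η) = -η
  slope : deriv feta (-η) < 1
  below : ∀ u, u ∈ Ioo (-η) 0 ∪ Ioi 1 → feta u < u
  above : ∀ u, u ∈ Iio (-η) ∪ Ioo 0 1 → u < feta u

/-- A nonincreasing bistable delayed travelling wave of speed `c` for the
nonlinearity `feta`: `U'' + cU' + feta(U(·+cτ)) − U = 0`, `U(−∞)=1`, `U(+∞)=−η`. -/
def BistableWave (feta : ℝ → ℝ) (η τ : ℝ) (U : ℝ → ℝ) (c : ℝ) : Prop :=
  ContDiff ℝ 2 U ∧ Antitone U ∧
    (∀ z, deriv (deriv U) z + c * deriv U z + feta (U (z + c * τ)) - U z = 0) ∧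
    Tendsto U atBot (𝓝 1) ∧ Tendsto U atTop (𝓝 (-η))

/-- A monostable delayed travelling wave of speed `c` for the nonlinearity `f`:
a `C²` profile with values in `[0,1]`, `U'' + cU' + f(U(·+cτ)) − U = 0`,
`U(−∞)=1`, `U(+∞)=0`. -/
def MonoWave (f : ℝ → ℝ) (τ : ℝ) (U : ℝ → ℝ) (c : ℝ) : Prop :=
  ContDiff ℝ 2 U ∧ (∀ z, U z ∈ Icc (0:ℝ) 1) ∧
    (∀ z, deriv (deriv U) z + c * deriv U z + f (U (z + c * τ)) - U z = 0) ∧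
    Tendsto U atBot (𝓝 1) ∧ Tendsto U atTop (𝓝 0)

/-!
Both tails are controlled by comparison with `A * exp (-μ * z)`. Near each end state the
nonlinearity has slope at most some `κ < 1`, so for small `μ > 0` the exponential is a
supersolution of the linearised delayed equation; a maximum principle on a half-line, whose
boundary condition is imposed on a strip of width `|c τ|` to absorb the delay, gives
`U + η ≤ A * exp (-μ * z)`. The reflection `z ↦ -U (-z)` solves an equation of the same kind and
handles `-∞`. The derivative bounds then follow from the mean value theorem applied on unit
intervals to `U` and to the first integral `U' + c U`.
-/

open Real

theorem IsLocalMin.deriv_deriv_nonneg {φ : ℝ → ℝ} {x : ℝ} (h : IsLocalMin φ x)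
    (hc : ContinuousAt φ x) : 0 ≤ deriv (deriv φ) x := by
  by_contra! hneg
  have hmax := isLocalMax_of_deriv_deriv_neg hneg h.deriv_eq_zero hc
  have hconst : φ =ᶠ[𝓝 x] fun _ ↦ φ x := (h.and hmax).mono fun y hy ↦ le_antisymm hy.2 hy.1
  rw [hconst.deriv.deriv_eq] at hneg
  simp at hneg

theorem exists_isMinOn_Ici_of_tendsto_zero {φ : ℝ → ℝ} (hφ : Continuous φ)
    (hlim : Tendsto φ atTop (𝓝 0)) {R z : ℝ} (hz : R ≤ z) (hneg : φ z < 0) :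
    ∃ z₀ ∈ Ici R, IsMinOn φ (Ici R) z₀ := by
  refine hφ.continuousOn.exists_isMinOn' isClosed_Ici hz ?_
  rw [cocompact_eq_atBot_atTop, inf_sup_right, (disjoint_atBot_principal_Ici R).eq_bot,
    bot_sup_eq]
  exact ((hlim.eventually (lt_mem_nhds hneg)).mono fun _ h ↦ h.le).filter_mono inf_le_left

theorem nonneg_of_delayed_supersolution {φ : ℝ → ℝ} {c b κ R : ℝ} (hφ : ContDiff ℝ 2 φ)
    (hlim : Tendsto φ atTop (𝓝 0)) (hκ : 0 ≤ κ) (hκ1 : κ < 1)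
    (hbdry : ∀ z ∈ Icc R (R + |b|), 0 ≤ φ z)
    (hsuper : ∀ z, R + |b| ≤ z → deriv (deriv φ) z + c * deriv φ z ≤ φ z - κ * φ (z + b))
    {z : ℝ} (hz : R ≤ z) : 0 ≤ φ z := by
  by_contra! hneg
  obtain ⟨z₀, hz₀, hmin⟩ := exists_isMinOn_Ici_of_tendsto_zero hφ.continuous hlim hz hneg
  have hz₀neg : φ z₀ < 0 := (hmin hz).trans_lt hneg
  have hz₀R : R + |b| < z₀ := by
    by_contra! h
    linarith [hbdry z₀ ⟨hz₀, h⟩]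
  have hloc : IsLocalMin φ z₀ :=
    hmin.isLocalMin (Ici_mem_nhds (by linarith [abs_nonneg b]))
  have hshift : φ z₀ ≤ φ (z₀ + b) := hmin (show R ≤ z₀ + b by linarith [neg_abs_le b])
  have hconvex := hloc.deriv_deriv_nonneg hφ.continuous.continuousAt
  have hsuper₀ := hsuper z₀ hz₀R.le
  rw [hloc.deriv_eq_zero] at hsuper₀
  nlinarith

-- The left side is `ψ'' z + c * ψ' z` for `ψ z = A * exp (-μ * z)`.
theorem exp_decay_supersolution {A μ c b κ : ℝ} (hA : 0 ≤ A) (hμ : 0 ≤ μ) (hκ : 0 ≤ κ)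
    (hchar : μ ^ 2 + |c| * μ + κ * exp (μ * |b|) ≤ 1) (z : ℝ) :
    μ ^ 2 * (A * exp (-μ * z)) + c * (-μ * (A * exp (-μ * z))) ≤
      A * exp (-μ * z) - κ * (A * exp (-μ * (z + b))) := by
  have hshift : exp (-μ * (z + b)) ≤ exp (μ * |b|) * exp (-μ * z) := by
    rw [← exp_add]
    exact exp_le_exp.2 (by nlinarith [neg_abs_le b])
  have hc : -(c * μ) ≤ |c| * μ := by nlinarith [neg_abs_le c]
  have hAe : 0 ≤ A * exp (-μ * z) := by positivity
  suffices μ ^ 2 * (A * exp (-μ * z)) + c * (-μ * (A * exp (-μ * z)))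
      + κ * (A * exp (-μ * (z + b))) ≤ A * exp (-μ * z) by linarith
  calc μ ^ 2 * (A * exp (-μ * z)) + c * (-μ * (A * exp (-μ * z)))
        + κ * (A * exp (-μ * (z + b)))
      ≤ (μ ^ 2 + |c| * μ) * (A * exp (-μ * z)) + κ * (A * (exp (μ * |b|) * exp (-μ * z))) := by
        exact add_le_add (by nlinarith) (by gcongr)
    _ = (μ ^ 2 + |c| * μ + κ * exp (μ * |b|)) * (A * exp (-μ * z)) := by ring
    _ ≤ A * exp (-μ * z) := by nlinarith

theorem exists_pos_decay_rate (c b : ℝ) {κ : ℝ} (hκ : κ < 1) :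
    ∃ μ > 0, μ ^ 2 + |c| * μ + κ * exp (μ * |b|) ≤ 1 := by
  have hcont : Continuous fun μ : ℝ ↦ μ ^ 2 + |c| * μ + κ * exp (μ * |b|) := by fun_prop
  have hev : ∀ᶠ μ in 𝓝[>] 0, μ ^ 2 + |c| * μ + κ * exp (μ * |b|) < 1 :=
    nhdsWithin_le_nhds (hcont.continuousAt.eventually_lt_const (by simpa using hκ))
  obtain ⟨μ, hμ, hpos⟩ := (hev.and self_mem_nhdsWithin).exists
  exact ⟨μ, hpos, hμ.le⟩

theorem exists_sub_le_mul_sub_of_deriv_lt {g : ℝ → ℝ} (hg : ContDiff ℝ 1 g) {a κ : ℝ}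
    (h : deriv g a < κ) :
    ∃ δ > 0, ∀ x ∈ Icc (a - δ) (a + δ), ∀ y ∈ Icc (a - δ) (a + δ), x ≤ y →
      g y - g x ≤ κ * (y - x) := by
  obtain ⟨r, hr, hball⟩ := Metric.eventually_nhds_iff_ball.1
    ((hg.continuous_deriv le_rfl).continuousAt.eventually_lt_const h)
  have hsub : Icc (a - r / 2) (a + r / 2) ⊆ Metric.ball a r := by
    rw [← Real.closedBall_eq_Icc]
    exact Metric.closedBall_subset_ball (by linarith)
  refine ⟨r / 2, by positivity, (convex_Icc _ _).image_sub_le_mul_sub_of_deriv_le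
    hg.continuous.continuousOn (hg.differentiable one_ne_zero).differentiableOn
    fun x hx ↦ (hball x (hsub (interior_subset hx))).le⟩

def DelayedWaveEq (g : ℝ → ℝ) (c b : ℝ) (U : ℝ → ℝ) : Prop :=
  ∀ z, deriv (deriv U) z + c * deriv U z + g (U (z + b)) - U z = 0

theorem DelayedWaveEq.reflect {g U : ℝ → ℝ} {c b : ℝ} (hU : DelayedWaveEq g c b U) :
    DelayedWaveEq (fun v ↦ -g (-v)) (-c) (-b) (fun z ↦ -U (-z)) := by
  have h1 : deriv (fun z ↦ -U (-z)) = fun z ↦ deriv U (-z) := by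
    funext z
    rw [deriv.fun_neg, deriv_comp_neg, neg_neg]
  intro z
  rw [h1, deriv_comp_neg]
  have := hU (-z)
  simp only [neg_add, neg_neg]
  linarith

theorem DelayedWaveEq.exists_sub_le_mul_exp {g U : ℝ → ℝ} {c b p B κ δ μ : ℝ}
    (hode : DelayedWaveEq g c b U) (hU : ContDiff ℝ 2 U) (hlim : Tendsto U atTop (𝓝 p))
    (hp : ∀ z, p ≤ U z) (hB : ∀ z, U z ≤ B) (hδ : 0 < δ)
    (hslope : ∀ v ∈ Icc p (p + δ), g v - p ≤ κ * (v - p)) (hκ : 0 ≤ κ) (hκ1 : κ < 1)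
    (hμ : 0 < μ) (hchar : μ ^ 2 + |c| * μ + κ * exp (μ * |b|) ≤ 1) :
    ∃ A ≥ 0, ∀ z, U z - p ≤ A * exp (-μ * z) := by
  obtain ⟨R, hR⟩ := eventually_atTop.1
    (hlim.eventually (Iic_mem_nhds (lt_add_of_pos_right p hδ)))
  have hBp : 0 ≤ B - p := by linarith [hp 0, hB 0]
  set A := (B - p) * exp (μ * (R + |b|))
  have hA : 0 ≤ A := by positivity
  have hnear : ∀ z ≤ R + |b|, U z - p ≤ A * exp (-μ * z) := fun z hz ↦
    calc U z - p ≤ B - p := by linarith [hB z]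
      _ ≤ A * exp (-μ * z) := by
        rw [mul_assoc, ← exp_add]
        exact le_mul_of_one_le_right hBp (one_le_exp (by nlinarith))
  refine ⟨A, hA, fun z ↦ ?_⟩
  rcases lt_or_ge z R with hz | hz
  · exact hnear z (by linarith [abs_nonneg b])
  have hψ : ∀ z, HasDerivAt (fun z ↦ A * exp (-μ * z)) (-μ * (A * exp (-μ * z))) z :=
    fun z ↦ (((hasDerivAt_id' z).const_mul (-μ)).exp.const_mul A).congr_deriv (by ring)
  have hU' : ∀ z, HasDerivAt U (deriv U z) z :=
    fun z ↦ (hU.differentiable two_ne_zero z).hasDerivAt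
  have hU'' : ∀ z, HasDerivAt (deriv U) (deriv (deriv U) z) z :=
    fun z ↦ ((hU.iterate_deriv' 1 1).differentiable one_ne_zero z).hasDerivAt
  have hφ' : deriv (fun z ↦ A * exp (-μ * z) - (U z - p)) =
      fun z ↦ -μ * (A * exp (-μ * z)) - deriv U z :=
    funext fun z ↦ ((hψ z).fun_sub ((hU' z).sub_const p)).deriv
  have hφ'' : ∀ z, deriv (deriv (fun z ↦ A * exp (-μ * z) - (U z - p))) z =
      μ ^ 2 * (A * exp (-μ * z)) - deriv (deriv U) z := by
    intro z
    rw [hφ', (((hψ z).const_mul (-μ)).fun_sub (hU'' z)).deriv]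
    ring
  have hψlim : Tendsto (fun z ↦ A * exp (-μ * z)) atTop (𝓝 0) := by
    simpa using (tendsto_exp_atBot.comp
      (tendsto_id.const_mul_atTop_of_neg (neg_neg_of_pos hμ))).const_mul A
  have key := nonneg_of_delayed_supersolution (c := c) (b := b) (R := R)
    (φ := fun z ↦ A * exp (-μ * z) - (U z - p)) (by fun_prop)
    (by simpa using hψlim.sub (hlim.sub_const p)) hκ hκ1 ?_ ?_ hz
  · linarith
  · exact fun z hz ↦ by linarith [hnear z hz.2]
  · intro z hz
    rw [hφ'', hφ']
    have hv : U (z + b) ∈ Icc p (p + δ) := ⟨hp _, hR _ (by linarith [neg_abs_le b])⟩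
    linarith [hslope _ hv, hode z, exp_decay_supersolution (c := c) (b := b) hA hμ.le hκ hchar z]

theorem DelayedWaveEq.abs_deriv_le {g U : ℝ → ℝ} {c b z B G : ℝ} (hode : DelayedWaveEq g c b U)
    (hU : ContDiff ℝ 2 U) (hB : ∀ s ∈ Icc (z - 1) z, |U s - U z| ≤ B)
    (hG : ∀ s ∈ Icc (z - 1) z, |U s - g (U (s + b))| ≤ G) :
    |deriv U z| ≤ (1 + |c|) * B + G := by
  have hU' : ∀ s, HasDerivAt U (deriv U s) s :=
    fun s ↦ (hU.differentiable two_ne_zero s).hasDerivAt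
  have hU'' : ∀ s, HasDerivAt (deriv U) (deriv (deriv U) s) s :=
    fun s ↦ ((hU.iterate_deriv' 1 1).differentiable one_ne_zero s).hasDerivAt
  obtain ⟨ξ, hξ, hslope⟩ := exists_hasDerivAt_eq_slope U (deriv U) (sub_one_lt z)
    hU.continuous.continuousOn fun s _ ↦ hU' s
  rw [sub_sub_cancel, div_one] at hslope
  -- `deriv U + c * U` is a primitive of `U - g (U (· + b))`
  obtain ⟨ζ, hζ, hprim⟩ := exists_hasDerivAt_eq_slope (fun s ↦ deriv U s + c * U s)
    (fun s ↦ U s - g (U (s + b))) hξ.2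
    ((hU.iterate_deriv' 1 1).continuous.add (continuous_const.mul hU.continuous)).continuousOn
    fun s _ ↦ ((hU'' s).add ((hU' s).const_mul c)).congr_deriv (by linarith [hode s])
  have hzξ : 0 < z - ξ := sub_pos.2 hξ.2
  have hdecomp : deriv U z = (U z - U (z - 1)) + c * (U ξ - U z)
      + (U ζ - g (U (ζ + b))) * (z - ξ) := by
    rw [hprim, div_mul_cancel₀ _ hzξ.ne', ← hslope]
    ring
  have hG0 : 0 ≤ G := (abs_nonneg _).trans (hG z ⟨by linarith, le_rfl⟩)
  calc |deriv U z|
      ≤ |U z - U (z - 1)| + |c| * |U ξ - U z| + |U ζ - g (U (ζ + b))| * (z - ξ) := by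
        rw [hdecomp, ← abs_mul, ← abs_of_pos hzξ, ← abs_mul, abs_of_pos hzξ]
        exact abs_add_three _ _ _
    _ ≤ B + |c| * B + G * 1 := by
        gcongr
        · rw [abs_sub_comm]; exact hB _ ⟨le_rfl, by linarith⟩
        · exact hB _ ⟨hξ.1.le, hξ.2.le⟩
        · exact hG _ ⟨by linarith [hζ.1, hξ.1], hζ.2.le⟩
        · linarith [hξ.1]
    _ = (1 + |c|) * B + G := by ring

theorem DelayedWaveEq.abs_deriv_deriv_le {g U : ℝ → ℝ} {c b : ℝ} (hode : DelayedWaveEq g c b U)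
    (z : ℝ) : |deriv (deriv U) z| ≤ |U z - g (U (z + b))| + |c| * |deriv U z| := by
  rw [show deriv (deriv U) z = (U z - g (U (z + b))) - c * deriv U z by linarith [hode z],
    ← abs_mul]
  exact abs_sub _ _

theorem exp_neg_mul_abs_le {μ : ℝ} (hμ : 0 ≤ μ) (s z : ℝ) :
    exp (-μ * |s|) ≤ exp (μ * |s - z|) * exp (-μ * |z|) := by
  rw [← exp_add]
  exact exp_le_exp.2 (by nlinarith [abs_sub_abs_le_abs_sub z s, abs_sub_comm s z])

theorem le_mul_exp_neg_mul_abs {x A μ z : ℝ} (h₁ : x ≤ A * exp (-μ * z))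
    (h₂ : x ≤ A * exp (μ * z)) : x ≤ A * exp (-μ * |z|) := by
  rcases abs_cases z with ⟨h, _⟩ | ⟨h, _⟩
  · rwa [h]
  · rwa [h, neg_mul_neg]

section Bistable

variable {f feta U : ℝ → ℝ} {η τ c : ℝ}

theorem BistableApprox.map_one (hf : Monostable f) (hfeta : BistableApprox f feta η) :
    feta 1 = 1 := by
  rw [hfeta.eqOn 1 ⟨zero_le_one, le_rfl⟩, hf.map1]

theorem BistableApprox.deriv_one_lt_one (hf : Monostable f) (hfeta : BistableApprox f feta η) :
    deriv feta 1 < 1 := by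
  have h1 : Ici (0 : ℝ) ∈ 𝓝 1 := Ici_mem_nhds one_pos
  have hfd : DifferentiableAt ℝ f 1 :=
    ((hf.smooth 1 (mem_Ici.2 zero_le_one)).contDiffAt h1).differentiableAt two_ne_zero
  have hu : UniqueDiffWithinAt ℝ (Icc 0 1) (1 : ℝ) :=
    uniqueDiffOn_Icc zero_lt_one 1 (right_mem_Icc.2 zero_le_one)
  calc deriv feta 1 = derivWithin feta (Icc 0 1) 1 :=
        ((hfeta.smooth.differentiable two_ne_zero 1).derivWithin hu).symm
    _ = derivWithin f (Icc 0 1) 1 :=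
        derivWithin_congr hfeta.eqOn (hfeta.eqOn 1 (right_mem_Icc.2 zero_le_one))
    _ = derivWithin f (Ici 0) 1 := by rw [hfd.derivWithin hu, derivWithin_of_mem_nhds h1]
    _ < 1 := hf.slope1

theorem BistableWave.mem_Icc (hU : BistableWave feta η τ U c) (z : ℝ) : U z ∈ Icc (-η) 1 :=
  ⟨hU.2.1.le_of_tendsto hU.2.2.2.2 z, hU.2.1.ge_of_tendsto hU.2.2.2.1 z⟩

theorem BistableWave.delayedWaveEq (hU : BistableWave feta η τ U c) :
    DelayedWaveEq feta c (c * τ) U :=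
  hU.2.2.1

theorem BistableWave.exists_exp_decay (hf : Monostable f) (hfeta : BistableApprox f feta η)
    (hU : BistableWave feta η τ U c) :
    ∃ μ > 0, ∃ A ≥ 0, ∀ z, U z + η ≤ A * exp (-μ * z) ∧ 1 - U z ≤ A * exp (μ * z) := by
  have hmem := hU.mem_Icc
  have hode := hU.delayedWaveEq
  obtain ⟨hU2, -, -, hbot, htop⟩ := hU
  obtain ⟨κ, hκ, hκ1⟩ :=
    exists_between (max_lt (max_lt hfeta.slope (hfeta.deriv_one_lt_one hf)) one_pos)
  simp only [max_lt_iff] at hκ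
  obtain ⟨⟨hκη, hκone⟩, hκ0⟩ := hκ
  obtain ⟨μ, hμ, hchar⟩ := exists_pos_decay_rate c (c * τ) hκ1
  obtain ⟨δ₁, hδ₁, hslope₁⟩ :=
    exists_sub_le_mul_sub_of_deriv_lt (hfeta.smooth.of_le one_le_two) hκη
  obtain ⟨δ₂, hδ₂, hslope₂⟩ :=
    exists_sub_le_mul_sub_of_deriv_lt (hfeta.smooth.of_le one_le_two) hκone
  have hnear₁ : ∀ v ∈ Icc (-η) (-η + δ₁), feta v - -η ≤ κ * (v - -η) := by
    intro v hv
    have := hslope₁ (-η) ⟨by linarith, by linarith⟩ v ⟨by linarith [hv.1], hv.2⟩ hv.1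
    linarith [hfeta.fixed]
  have hnear₂ : ∀ v ∈ Icc (-1) (-1 + δ₂), -feta (-v) - -1 ≤ κ * (v - -1) := by
    intro v hv
    have := hslope₂ (-v) ⟨by linarith [hv.2], by linarith [hv.1]⟩ 1 ⟨by linarith, by linarith⟩
      (by linarith [hv.1])
    linarith [hfeta.map_one hf]
  obtain ⟨A₁, hA₁, hdecay₁⟩ := hode.exists_sub_le_mul_exp hU2 htop
    (fun z ↦ (hmem z).1) (fun z ↦ (hmem z).2) hδ₁ hnear₁ hκ0.le hκ1 hμ hchar
  -- the reflection `z ↦ -U (-z)` turns the limit `1` at `-∞` into the limit `-1` at `+∞`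
  obtain ⟨A₂, hA₂, hdecay₂⟩ := hode.reflect.exists_sub_le_mul_exp (B := η)
    (by fun_prop) (by simpa using (hbot.comp tendsto_neg_atTop_atBot).neg)
    (fun z ↦ by linarith [(hmem (-z)).2]) (fun z ↦ by linarith [(hmem (-z)).1]) hδ₂ hnear₂
    hκ0.le hκ1 hμ (by rwa [abs_neg, abs_neg])
  refine ⟨μ, hμ, max A₁ A₂, le_max_of_le_left hA₁, fun z ↦ ⟨?_, ?_⟩⟩
  · calc U z + η ≤ A₁ * exp (-μ * z) := by linarith [hdecay₁ z]
      _ ≤ max A₁ A₂ * exp (-μ * z) := by gcongr; exact le_max_left _ _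
  · have := hdecay₂ (-z)
    rw [neg_neg, neg_mul_neg] at this
    calc 1 - U z ≤ A₂ * exp (μ * z) := by linarith
      _ ≤ max A₁ A₂ * exp (μ * z) := by gcongr; exact le_max_right _ _

theorem BistableWave.exists_abs_sub_feta_le (hf : Monostable f) (hfeta : BistableApprox f feta η)
    (hU : BistableWave feta η τ U c) {μ A : ℝ} (hμ : 0 ≤ μ) (hA : 0 ≤ A)
    (hdecay : ∀ z, U z + η ≤ A * exp (-μ * z) ∧ 1 - U z ≤ A * exp (μ * z)) :
    ∃ C ≥ 0, ∀ z, |U z - feta (U (z + c * τ))| ≤ C * exp (-μ * |z|) := by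
  have hmem := hU.mem_Icc
  have hη1 : -η ≤ 1 := (hmem 0).1.trans (hmem 0).2
  obtain ⟨K, hK⟩ := hfeta.smooth.contDiffOn.exists_lipschitzOnWith two_ne_zero
    (convex_Icc (-η) 1) isCompact_Icc
  have hsplit : ∀ p ∈ Icc (-η) 1, feta p = p → ∀ z,
      |U z - feta (U (z + c * τ))| ≤ |U z - p| + K * |U (z + c * τ) - p| := by
    intro p hp hfix z
    have hLip := hK.dist_le_mul _ (hmem (z + c * τ)) p hp
    rw [Real.dist_eq, Real.dist_eq, hfix] at hLip
    calc |U z - feta (U (z + c * τ))| = |(U z - p) - (feta (U (z + c * τ)) - p)| := by ring_nf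
      _ ≤ |U z - p| + |feta (U (z + c * τ)) - p| := abs_sub _ _
      _ ≤ |U z - p| + K * |U (z + c * τ) - p| := by gcongr
  refine ⟨A * (1 + K * exp (μ * |c * τ|)), by positivity, fun z ↦ le_mul_exp_neg_mul_abs ?_ ?_⟩
  · have hshift : exp (-μ * (z + c * τ)) ≤ exp (μ * |c * τ|) * exp (-μ * z) := by
      rw [← exp_add]
      exact exp_le_exp.2 (by nlinarith [neg_abs_le (c * τ)])
    calc |U z - feta (U (z + c * τ))| ≤ |U z - -η| + K * |U (z + c * τ) - -η| :=
          hsplit (-η) ⟨le_rfl, hη1⟩ hfeta.fixed z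
      _ = (U z + η) + K * (U (z + c * τ) + η) := by
          rw [abs_of_nonneg (by linarith [(hmem z).1]),
            abs_of_nonneg (by linarith [(hmem (z + c * τ)).1])]
          ring
      _ ≤ A * exp (-μ * z) + K * (A * (exp (μ * |c * τ|) * exp (-μ * z))) := by
          gcongr
          · exact (hdecay z).1
          · exact (hdecay _).1.trans (by gcongr)
      _ = A * (1 + K * exp (μ * |c * τ|)) * exp (-μ * z) := by ring
  · have hshift : exp (μ * (z + c * τ)) ≤ exp (μ * |c * τ|) * exp (μ * z) := by
      rw [← exp_add]
      exact exp_le_exp.2 (by nlinarith [le_abs_self (c * τ)])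
    calc |U z - feta (U (z + c * τ))| ≤ |U z - 1| + K * |U (z + c * τ) - 1| :=
          hsplit 1 ⟨hη1, le_rfl⟩ (hfeta.map_one hf) z
      _ = (1 - U z) + K * (1 - U (z + c * τ)) := by
          rw [abs_sub_comm, abs_of_nonneg (by linarith [(hmem z).2]), abs_sub_comm,
            abs_of_nonneg (by linarith [(hmem (z + c * τ)).2])]
      _ ≤ A * exp (μ * z) + K * (A * (exp (μ * |c * τ|) * exp (μ * z))) := by
          gcongr
          · exact (hdecay z).2
          · exact (hdecay _).2.trans (by gcongr)
      _ = A * (1 + K * exp (μ * |c * τ|)) * exp (μ * z) := by ring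

theorem BistableWave.exists_deriv_bound (hf : Monostable f) (hfeta : BistableApprox f feta η)
    (hU : BistableWave feta η τ U c) {μ A : ℝ} (hμ : 0 ≤ μ) (hA : 0 ≤ A)
    (hdecay : ∀ z, U z + η ≤ A * exp (-μ * z) ∧ 1 - U z ≤ A * exp (μ * z)) :
    ∃ M, ∀ z, |deriv U z| + |deriv (deriv U) z| ≤ M * exp (-μ * |z|) := by
  obtain ⟨C, hC, hforce⟩ := hU.exists_abs_sub_feta_le hf hfeta hμ hA hdecay
  have hmem := hU.mem_Icc
  have hode := hU.delayedWaveEq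
  refine ⟨(1 + |c|) * ((1 + |c|) * (A * exp μ) + C * exp μ) + C, fun z ↦ ?_⟩
  have hosc : ∀ s ∈ Icc (z - 1) z, |U s - U z| ≤ A * exp μ * exp (-μ * |z|) := by
    intro s hs
    have hmono : U z ≤ U s ∧ U s ≤ U (z - 1) := ⟨hU.2.1 hs.2, hU.2.1 hs.1⟩
    rw [abs_of_nonneg (by linarith)]
    refine le_mul_exp_neg_mul_abs ?_ ?_
    · calc U s - U z ≤ U (z - 1) + η := by linarith [(hmem z).1]
        _ ≤ A * exp (-μ * (z - 1)) := (hdecay _).1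
        _ = A * exp μ * exp (-μ * z) := by rw [mul_assoc, ← exp_add]; ring_nf
    · calc U s - U z ≤ 1 - U z := by linarith [(hmem s).2]
        _ ≤ A * exp (μ * z) := (hdecay z).2
        _ ≤ A * exp μ * exp (μ * z) := by gcongr; exact le_mul_of_one_le_right hA (one_le_exp hμ)
  have hforce' : ∀ s ∈ Icc (z - 1) z,
      |U s - feta (U (s + c * τ))| ≤ C * exp μ * exp (-μ * |z|) := by
    intro s hs
    have hsz : |s - z| ≤ 1 := abs_le.2 ⟨by linarith [hs.1], by linarith [hs.2]⟩
    calc |U s - feta (U (s + c * τ))| ≤ C * exp (-μ * |s|) := hforce s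
      _ ≤ C * (exp (μ * |s - z|) * exp (-μ * |z|)) := by gcongr; exact exp_neg_mul_abs_le hμ s z
      _ ≤ C * exp μ * exp (-μ * |z|) := by rw [mul_assoc]; gcongr; nlinarith
  have h1 := hode.abs_deriv_le hU.1 hosc hforce'
  have h2 := mul_le_mul_of_nonneg_left h1 (abs_nonneg c)
  linarith [hode.abs_deriv_deriv_le z, hforce z]

end Bistable

theorem stmt_3_general (τ η : ℝ)
    (f feta : ℝ → ℝ) (hf : Monostable f) (hfeta : BistableApprox f feta η)
    (U : ℝ → ℝ) (c : ℝ) (hU : BistableWave feta η τ U c) :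
    ∃ μ > (0:ℝ), ∃ M > (0:ℝ),
      (∀ z ≤ (0:ℝ), |1 - U z| + |(-η) - U (-z)| ≤ M * Real.exp (μ * z)) ∧
      (∀ z : ℝ, |deriv U z| + |deriv (deriv U) z| ≤ M * Real.exp (-μ * |z|)) := by
  obtain ⟨μ, hμ, A, hA, hdecay⟩ := hU.exists_exp_decay hf hfeta
  obtain ⟨M, hM⟩ := hU.exists_deriv_bound hf hfeta hμ.le hA hdecay
  have hA_le : 2 * A ≤ max (2 * A) M := le_max_left _ _
  have hM_le : M ≤ max (2 * A) M := le_max_right _ _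
  refine ⟨μ, hμ, max (2 * A) M + 1, by linarith, fun z _ ↦ ?_, fun z ↦ ?_⟩
  · have h₁ := (hdecay z).2
    have h₂ := (hdecay (-z)).1
    rw [neg_mul_neg] at h₂
    rw [abs_of_nonneg (by linarith [(hU.mem_Icc z).2]),
      abs_of_nonpos (by linarith [(hU.mem_Icc (-z)).1])]
    calc 1 - U z + -(-η - U (-z)) ≤ 2 * A * exp (μ * z) := by linarith
      _ ≤ (max (2 * A) M + 1) * exp (μ * z) := by gcongr; linarith
  · calc |deriv U z| + |deriv (deriv U) z| ≤ M * exp (-μ * |z|) := hM z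
      _ ≤ (max (2 * A) M + 1) * exp (-μ * |z|) := by gcongr; linarith

/-- Exponential decay of a bistable delayed travelling wave profile towards its
limits, and exponential decay of its first and second derivatives. -/
theorem stmt_3 (τ η : ℝ) (hτ : 0 < τ) (hη : η ∈ Ioc (0:ℝ) 1)
    (f feta : ℝ → ℝ) (hf : Monostable f) (hfeta : BistableApprox f feta η)
    (U : ℝ → ℝ) (c : ℝ) (hU : BistableWave feta η τ U c) :
    ∃ μ > (0:ℝ), ∃ M > (0:ℝ),
      (∀ z ≤ (0:ℝ), |1 - U z| + |(-η) - U (-z)| ≤ M * Real.exp (μ * z)) ∧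
      (∀ z : ℝ, |deriv U z| + |deriv (deriv U) z| ≤ M * Real.exp (-μ * |z|)) :=
  stmt_3_general τ η f feta hf hfeta U c hU
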